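/- Assume the filtration setup. If N is a finitely generated R-module, n ≥ 1 is an integer, 1 ≤ i ≤ t, Ext^n_R(N, M_i) = 0, and M_{i-1} is faithful as an R-module (its R-annihilator is zero), then the projective dimension of N over R is at most n − 1. -/

import Mathlib

/-!
Let `𝔪` be the maximal ideal of `R`. In a minimal free resolution `⋯ → R^{b₁} → R^{b₀} → N`
every syzygy `Ω ⊆ R^b` has all its coordinates in `𝔪`. Take `Ω` to be the image of
`R^{b_n} → R^{b_{n-1}}`; then `Ext^n_R(N, M_i) = 0` says that every `R`-linear map `Ω → M_i`
extends to `R^b`. For `u ∈ M_{i-1}`, the map `ω ↦ ω_k u` lands in `M_i` because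
`𝔪 M_{i-1} ⊆ M_i`, and expanding its extension in the standard basis shows `ω_k u ∈ I M_i`,
where `I` is the ideal generated by the coordinates of `Ω`. Hence
`I M_{i-1} ⊆ I M_i ⊆ Jac(S) I M_{i-1}`, so `I M_{i-1} = 0` by Nakayama over `S`, then `I = 0`
by faithfulness. Thus `Ω = 0`, and the resolution stops in degree `n - 1`.
-/

open CategoryTheory IsLocalRing

/-- `N` has projective dimension at most `n` over `R`:
`Ext^{n+1}_R(N, L)` vanishes for every `R`-module `L`. -/
def HasPdLE (R : Type) [CommRing R] (N : Type) [AddCommGroup N] [Module R N] (n : ℕ) : Prop :=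
  ∀ L : ModuleCat.{0} R,
    Subsingleton (((Ext R (ModuleCat.{0} R) (n + 1)).obj (Opposite.op (ModuleCat.of R N))).obj L)


namespace CategoryTheory.ProjectiveResolution

variable {R : Type*} [Ring R] {C : Type*} [Category* C] [Abelian C] [Linear R C]
  [EnoughProjectives C]

theorem isZero_ext_succ_iff {X : C} (P : ProjectiveResolution X) (Y : C) (m : ℕ) :
    Limits.IsZero (((Ext R C (m + 1)).obj (Opposite.op X)).obj Y) ↔
      ∀ φ : P.complex.X (m + 1) ⟶ Y, P.complex.d (m + 2) (m + 1) ≫ φ = 0 →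
        ∃ ψ : P.complex.X m ⟶ Y, P.complex.d (m + 1) m ≫ ψ = φ := by
  rw [(P.isoExt (m + 1) Y).isZero_iff, ← HomologicalComplex.exactAt_iff_isZero_homology,
    HomologicalComplex.exactAt_iff' _ m (m + 1) (m + 2) (by simp) (by simp),
    ShortComplex.moduleCat_exact_iff]
  rfl

end CategoryTheory.ProjectiveResolution

section MinimalResolution

variable {R : Type} [CommRing R] [IsLocalRing R]

theorem exists_fin_surjective_ker_coord_mem_maximalIdeal (X : Type*) [AddCommGroup X] [Module R X]
    [Module.Finite R X] :
    ∃ (b : ℕ) (p : (Fin b → R) →ₗ[R] X), Function.Surjective p ∧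
      ∀ c ∈ LinearMap.ker p, ∀ j, c j ∈ maximalIdeal R := by
  classical
  have hex := Module.Finite.exists_fin (R := R) (M := X)
  obtain ⟨b, x, hx, hmin⟩ : ∃ b, ∃ x : Fin b → X, Submodule.span R (Set.range x) = ⊤ ∧
      ∀ b' (x' : Fin b' → X), Submodule.span R (Set.range x') = ⊤ → b ≤ b' :=
    ⟨_, (Nat.find_spec hex).choose, (Nat.find_spec hex).choose_spec,
      fun _ x' h => Nat.find_min' hex ⟨x', h⟩⟩
  refine ⟨b, Fintype.linearCombination R x, ?_, fun c hc j => ?_⟩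
  · rw [← LinearMap.range_eq_top, Fintype.range_linearCombination, hx]
  by_contra hj
  obtain ⟨b, rfl⟩ : ∃ b', b = b' + 1 := Nat.exists_eq_succ_of_ne_zero j.pos.ne'
  -- `c j` is a unit, so the relation `c` expresses `x j` through the other generators
  have hxj : x j ∈ Submodule.span R (Set.range (x ∘ j.succAbove)) := by
    have h0 : c j • x j + ∑ k, c (j.succAbove k) • x (j.succAbove k) = 0 := by
      rw [← Fin.sum_univ_succAbove (fun k => c k • x k) j]
      simpa [Fintype.linearCombination_apply] using hc
    rw [← Submodule.smul_mem_iff_of_isUnit _ (notMem_maximalIdeal.mp hj),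
      eq_neg_of_add_eq_zero_left h0]
    exact neg_mem (Submodule.sum_mem _ fun k _ =>
      Submodule.smul_mem _ _ (Submodule.subset_span ⟨k, rfl⟩))
  refine (hmin b (x ∘ j.succAbove) ?_).not_gt (Nat.lt_succ_self b)
  rw [eq_top_iff, ← hx, Submodule.span_le]
  rintro _ ⟨k, rfl⟩
  cases k using j.succAboveCases with
  | x => exact hxj
  | p k => exact Submodule.subset_span ⟨k, rfl⟩

variable (R) in
noncomputable def minimalCoverRank (X : Type*) [AddCommGroup X] [Module R X]
    [Module.Finite R X] : ℕ :=
  (exists_fin_surjective_ker_coord_mem_maximalIdeal (R := R) X).choose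

noncomputable def minimalCover (X : Type*) [AddCommGroup X] [Module R X] [Module.Finite R X] :
    (Fin (minimalCoverRank R X) → R) →ₗ[R] X :=
  (exists_fin_surjective_ker_coord_mem_maximalIdeal X).choose_spec.choose

section
variable {X : Type*} [AddCommGroup X] [Module R X] [Module.Finite R X]

theorem minimalCover_surjective : Function.Surjective (minimalCover (R := R) X) :=
  (exists_fin_surjective_ker_coord_mem_maximalIdeal X).choose_spec.choose_spec.1

theorem apply_mem_maximalIdeal_of_mem_ker_minimalCover {c : Fin (minimalCoverRank R X) → R}
    (hc : c ∈ LinearMap.ker (minimalCover X)) (j : Fin (minimalCoverRank R X)) :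
    c j ∈ maximalIdeal R :=
  (exists_fin_surjective_ker_coord_mem_maximalIdeal X).choose_spec.choose_spec.2 c hc j

end

variable [IsNoetherianRing R] (R) (N : Type) [AddCommGroup N] [Module R N] [Module.Finite R N]

/-- `minimalSyzygy R N j = ⟨b_j, K_j⟩` with `K_j ⊆ R^{b_j}` the kernel of the minimal cover
`R^{b_j} ↠ K_{j-1}` (and `K_{-1} = N`). -/
noncomputable def minimalSyzygy : ℕ → Σ b : ℕ, Submodule R (Fin b → R)
  | 0 => ⟨minimalCoverRank R N, LinearMap.ker (minimalCover N)⟩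
  | j + 1 =>
    ⟨minimalCoverRank R (minimalSyzygy j).2, LinearMap.ker (minimalCover (minimalSyzygy j).2)⟩

noncomputable def minimalSyzygyCover (j : ℕ) :
    (Fin (minimalSyzygy R N (j + 1)).1 → R) →ₗ[R] (minimalSyzygy R N j).2 :=
  minimalCover _

noncomputable def minimalResolutionDiff (j : ℕ) :
    (Fin (minimalSyzygy R N (j + 1)).1 → R) →ₗ[R] (Fin (minimalSyzygy R N j).1 → R) :=
  (minimalSyzygy R N j).2.subtype ∘ₗ minimalSyzygyCover R N j

variable {R N}

theorem minimalSyzygyCover_surjective (j : ℕ) : Function.Surjective (minimalSyzygyCover R N j) :=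
  minimalCover_surjective

theorem ker_minimalSyzygyCover (j : ℕ) :
    LinearMap.ker (minimalSyzygyCover R N j) = (minimalSyzygy R N (j + 1)).2 :=
  rfl

theorem minimalSyzygyCover_comp_subtype (j : ℕ) :
    minimalSyzygyCover R N j ∘ₗ (minimalSyzygy R N (j + 1)).2.subtype = 0 :=
  LinearMap.comp_ker_subtype _

theorem apply_mem_maximalIdeal_of_mem_minimalSyzygy {j : ℕ}
    {ω : Fin (minimalSyzygy R N j).1 → R} (hω : ω ∈ (minimalSyzygy R N j).2)
    (k : Fin (minimalSyzygy R N j).1) :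
    ω k ∈ maximalIdeal R := by
  cases j <;> exact apply_mem_maximalIdeal_of_mem_ker_minimalCover hω k

theorem range_minimalResolutionDiff (j : ℕ) :
    LinearMap.range (minimalResolutionDiff R N j) = (minimalSyzygy R N j).2 := by
  rw [minimalResolutionDiff, LinearMap.range_comp,
    LinearMap.range_eq_top.mpr (minimalSyzygyCover_surjective j), Submodule.map_top,
    Submodule.range_subtype]

theorem ker_minimalResolutionDiff (j : ℕ) :
    LinearMap.ker (minimalResolutionDiff R N j) = (minimalSyzygy R N (j + 1)).2 := by
  rw [minimalResolutionDiff, LinearMap.ker_comp_of_ker_eq_bot _ (Submodule.ker_subtype _),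
    ker_minimalSyzygyCover]

theorem minimalResolutionDiff_comp (j : ℕ) :
    minimalResolutionDiff R N j ∘ₗ minimalResolutionDiff R N (j + 1) = 0 := by
  rw [← LinearMap.range_le_ker_iff, range_minimalResolutionDiff, ker_minimalResolutionDiff]

variable (R N) in
noncomputable def minimalResolutionComplex : ChainComplex (ModuleCat R) ℕ :=
  ChainComplex.of (fun j => ModuleCat.of R (Fin (minimalSyzygy R N j).1 → R))
    (fun j => ModuleCat.ofHom (minimalResolutionDiff R N j))
    (fun j => by rw [← ModuleCat.ofHom_comp, minimalResolutionDiff_comp]; rfl)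

theorem minimalResolutionComplex_d (j : ℕ) :
    (minimalResolutionComplex R N).d (j + 1) j =
      ModuleCat.ofHom (minimalResolutionDiff R N j) := by
  simp [minimalResolutionComplex]

variable (R N) in
noncomputable def minimalResolution : ProjectiveResolution (ModuleCat.of R N) where
  complex := minimalResolutionComplex R N
  projective j := ModuleCat.projective_of_free (Pi.basisFun R _)
  π := (ChainComplex.toSingle₀Equiv _ _).symm ⟨ModuleCat.ofHom (minimalCover N), by
    rw [minimalResolutionComplex_d]
    exact ModuleCat.hom_ext (LinearMap.range_le_ker_iff.mp (range_minimalResolutionDiff 0).le)⟩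
  quasiIso := ⟨fun n => by
    cases n with
    | zero =>
      rw [ChainComplex.quasiIsoAt₀_iff, ShortComplex.quasiIso_iff_of_zeros']
      · constructor
        · rw [ShortComplex.moduleCat_exact_iff_range_eq_ker]
          show LinearMap.range ((minimalResolutionComplex R N).d 1 0).hom =
            LinearMap.ker (minimalCover N)
          rw [minimalResolutionComplex_d]
          exact range_minimalResolutionDiff 0
        · exact (ModuleCat.epi_iff_surjective _).mpr (minimalCover_surjective (X := N))
      all_goals rfl
    | succ n =>
      rw [quasiIsoAt_iff_exactAt' _ _ (ChainComplex.exactAt_succ_single_obj _ _),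
        HomologicalComplex.exactAt_iff' _ (n + 2) (n + 1) n (by simp) (by simp),
        ShortComplex.moduleCat_exact_iff_range_eq_ker]
      show LinearMap.range ((minimalResolutionComplex R N).d (n + 2) (n + 1)).hom =
        LinearMap.ker ((minimalResolutionComplex R N).d (n + 1) n).hom
      rw [minimalResolutionComplex_d, minimalResolutionComplex_d]
      exact (range_minimalResolutionDiff _).trans (ker_minimalResolutionDiff _).symm⟩

theorem minimalResolution_complex_d (j : ℕ) :
    (minimalResolution R N).complex.d (j + 1) j =
      ModuleCat.ofHom (minimalResolutionDiff R N j) :=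
  minimalResolutionComplex_d j

theorem exists_extension_of_subsingleton_ext {m : ℕ} {Y : ModuleCat R}
    (h : Subsingleton (((Ext R (ModuleCat R) (m + 1)).obj (Opposite.op (ModuleCat.of R N))).obj Y))
    (χ : (minimalSyzygy R N m).2 →ₗ[R] Y) :
    ∃ ψ : (Fin (minimalSyzygy R N m).1 → R) →ₗ[R] Y, ψ ∘ₗ (minimalSyzygy R N m).2.subtype = χ := by
  rw [← ModuleCat.isZero_iff_subsingleton, (minimalResolution R N).isZero_ext_succ_iff] at h
  obtain ⟨ψ, hψ⟩ := h (ModuleCat.ofHom (χ ∘ₗ minimalSyzygyCover R N m) :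
      ModuleCat.of R (Fin (minimalSyzygy R N (m + 1)).1 → R) ⟶ Y) (by
    rw [minimalResolution_complex_d]
    refine ModuleCat.hom_ext ?_
    show (χ ∘ₗ minimalSyzygyCover R N m) ∘ₗ minimalResolutionDiff R N (m + 1) = 0
    rw [minimalResolutionDiff, LinearMap.comp_assoc,
      ← LinearMap.comp_assoc _ _ (minimalSyzygyCover R N m), minimalSyzygyCover_comp_subtype,
      LinearMap.zero_comp, LinearMap.comp_zero])
  refine ⟨ψ.hom, (LinearMap.cancel_right (minimalSyzygyCover_surjective m)).mp ?_⟩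
  rw [minimalResolution_complex_d] at hψ
  exact congrArg ModuleCat.Hom.hom hψ

theorem hasPdLE_of_minimalSyzygy_eq_bot {m : ℕ} (h : (minimalSyzygy R N m).2 = ⊥) :
    HasPdLE R N m := by
  intro Y
  rw [← ModuleCat.isZero_iff_subsingleton, (minimalResolution R N).isZero_ext_succ_iff]
  have hsurj : Function.Surjective (minimalResolutionDiff R N (m + 1)) := by
    rw [← LinearMap.range_eq_top, range_minimalResolutionDiff, ← ker_minimalResolutionDiff,
      LinearMap.ker_eq_top, ← LinearMap.range_eq_bot, range_minimalResolutionDiff, h]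
  intro φ hφ
  rw [minimalResolution_complex_d] at hφ
  refine ⟨0, ModuleCat.hom_ext ((LinearMap.cancel_right hsurj).mp ?_)⟩
  exact (congrArg ModuleCat.Hom.hom hφ).symm

end MinimalResolution

section
variable {R S M : Type*} [CommRing R] [CommRing S] [Algebra R S]
  [AddCommGroup M] [Module R M] [Module S M] [IsScalarTower R S M]

theorem apply_smul_mem_map_smul_of_forall_exists_extension {𝔞 I : Ideal R} {D E : Submodule S M}
    (hDE : 𝔞 • D.restrictScalars R ≤ E.restrictScalars R)
    {b : ℕ} {Ω : Submodule R (Fin b → R)} (hΩ𝔞 : ∀ ω ∈ Ω, ∀ k, ω k ∈ 𝔞)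
    (hΩI : ∀ ω ∈ Ω, ∀ k, ω k ∈ I)
    (hext : ∀ χ : Ω →ₗ[R] E, ∃ ψ : (Fin b → R) →ₗ[R] E, ψ ∘ₗ Ω.subtype = χ)
    {ω : Fin b → R} (hω : ω ∈ Ω) (k : Fin b) {u : M} (hu : u ∈ D) :
    ω k • u ∈ I.map (algebraMap R S) • E := by
  let χ : Ω →ₗ[R] E :=
    LinearMap.codRestrict (E.restrictScalars R)
      (LinearMap.toSpanSingleton R M u ∘ₗ LinearMap.proj k ∘ₗ Ω.subtype)
      fun ω' => hDE (Submodule.smul_mem_smul (hΩ𝔞 _ ω'.2 k) hu)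
  obtain ⟨ψ, hψ⟩ := hext χ
  have hψω : ω k • u = (ψ ω : M) := congrArg Subtype.val (LinearMap.congr_fun hψ ⟨ω, hω⟩).symm
  rw [hψω, LinearMap.pi_apply_eq_sum_univ ψ ω, Submodule.coe_sum]
  refine Submodule.sum_mem _ fun k' _ => ?_
  rw [Submodule.coe_smul_of_tower, ← algebraMap_smul S (ω k')]
  exact Submodule.smul_mem_smul (Ideal.mem_map_of_mem _ (hΩI ω hω k')) (ψ _).2

variable [IsNoetherianRing S] [Module.Finite S M]

theorem eq_bot_of_forall_exists_extension {𝔞 : Ideal R} {D E : Submodule S M}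
    (hDE : 𝔞 • D.restrictScalars R ≤ E.restrictScalars R)
    (hED : E ≤ (⊥ : Ideal S).jacobson • D)
    (hD : ∀ r : R, (∀ x : D, r • x = 0) → r = 0)
    {b : ℕ} {Ω : Submodule R (Fin b → R)} (hΩ : ∀ ω ∈ Ω, ∀ k, ω k ∈ 𝔞)
    (hext : ∀ χ : Ω →ₗ[R] E, ∃ ψ : (Fin b → R) →ₗ[R] E, ψ ∘ₗ Ω.subtype = χ) :
    Ω = ⊥ := by
  set I : Ideal R := Ideal.span {r | ∃ ω ∈ Ω, ∃ k, ω k = r}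
  set J : Ideal S := (⊥ : Ideal S).jacobson
  set T : Submodule S M := I.map (algebraMap R S) • D
  have hΩI : ∀ ω ∈ Ω, ∀ k, ω k ∈ I := fun ω hω k => Ideal.subset_span ⟨ω, hω, k, rfl⟩
  have hTE : T ≤ I.map (algebraMap R S) • E := by
    -- `I` lies in the colon ideal `(I E : D)` because its generators do
    refine Submodule.smul_le.mpr fun s hs u hu => ?_
    refine Submodule.mem_colon.mp (Ideal.map_le_iff_le_comap.mpr ?_ hs) u hu
    rw [Ideal.span_le]
    rintro _ ⟨ω, hω, k, rfl⟩
    refine Ideal.mem_comap.mpr (Submodule.mem_colon.mpr fun u hu => ?_)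
    rw [algebraMap_smul]
    exact apply_smul_mem_map_smul_of_forall_exists_extension hDE hΩ hΩI hext hω k hu
  have hT : T ≤ J • T := calc
    T ≤ I.map (algebraMap R S) • E := hTE
    _ ≤ I.map (algebraMap R S) • (J • D) := Submodule.smul_mono le_rfl hED
    _ = J • T := by
      rw [← Submodule.smul_assoc, smul_eq_mul, mul_comm, ← smul_eq_mul, Submodule.smul_assoc]
  have hT0 : T = ⊥ :=
    Submodule.eq_bot_of_le_smul_of_le_jacobson_bot J T (IsNoetherian.noetherian T) hT le_rfl
  refine eq_bot_iff.mpr fun ω hω => funext fun k => hD _ fun x => Subtype.ext ?_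
  have : ω k • (x : M) ∈ T := by
    rw [← algebraMap_smul S]
    exact Submodule.smul_mem_smul (Ideal.mem_map_of_mem _ (hΩI ω hω k)) x.2
  simpa [hT0] using this
end

theorem pd_le_of_ext_vanishing_faithful_general
    (R : Type) [CommRing R] [IsNoetherianRing R] [IsLocalRing R]
    (S : Type) [CommRing S] [IsNoetherianRing S] [Algebra R S]
    (M : Type) [AddCommGroup M] [Module R M] [Module S M] [IsScalarTower R S M]
    [Module.Finite S M]
    (t : ℕ)
    (Mfil : ℕ → Submodule S M)
    (hlow : ∀ i, 1 ≤ i → i ≤ t →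
      maximalIdeal R • (Mfil (i - 1)).restrictScalars R ≤ (Mfil i).restrictScalars R)
    (hhigh : ∀ i, 1 ≤ i → i ≤ t → Mfil i ≤ (⊥ : Ideal S).jacobson • Mfil (i - 1))
    (N : Type) [AddCommGroup N] [Module R N] [Module.Finite R N]
    (n : ℕ) (hn : 1 ≤ n) (i : ℕ) (hi1 : 1 ≤ i) (hit : i ≤ t)
    (hvanish : Subsingleton
      (((Ext R (ModuleCat.{0} R) n).obj (Opposite.op (ModuleCat.of R N))).obj
        (ModuleCat.of R ↥(Mfil i))))
    (hfaithful : ∀ r : R, (∀ x : ↥(Mfil (i - 1)), r • x = 0) → r = 0) :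
    HasPdLE R N (n - 1) := by
  obtain ⟨m, rfl⟩ : ∃ m, n = m + 1 := ⟨n - 1, by omega⟩
  rw [Nat.add_sub_cancel]
  exact hasPdLE_of_minimalSyzygy_eq_bot <|
    eq_bot_of_forall_exists_extension (hlow i hi1 hit) (hhigh i hi1 hit) hfaithful
      (fun _ => apply_mem_maximalIdeal_of_mem_minimalSyzygy)
      (fun χ => exists_extension_of_subsingleton_ext hvanish χ)

theorem pd_le_of_ext_vanishing_faithful
    (R : Type) [CommRing R] [IsNoetherianRing R] [IsLocalRing R]
    (S : Type) [CommRing S] [IsNoetherianRing S] [Algebra R S]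
    (hmS : (maximalIdeal R).map (algebraMap R S) ≤ (⊥ : Ideal S).jacobson)
    (M : Type) [AddCommGroup M] [Module R M] [Module S M] [IsScalarTower R S M]
    [Nontrivial M] [Module.Finite S M]
    (t : ℕ) (ht : 1 ≤ t)
    (Mfil : ℕ → Submodule S M)
    (hM0 : Mfil 0 = ⊤)
    (hlow : ∀ i, 1 ≤ i → i ≤ t →
      maximalIdeal R • (Mfil (i - 1)).restrictScalars R ≤ (Mfil i).restrictScalars R)
    (hhigh : ∀ i, 1 ≤ i → i ≤ t → Mfil i ≤ (⊥ : Ideal S).jacobson • Mfil (i - 1))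
    (N : Type) [AddCommGroup N] [Module R N] [Module.Finite R N]
    (n : ℕ) (hn : 1 ≤ n) (i : ℕ) (hi1 : 1 ≤ i) (hit : i ≤ t)
    (hvanish : Subsingleton
      (((Ext R (ModuleCat.{0} R) n).obj (Opposite.op (ModuleCat.of R N))).obj
        (ModuleCat.of R ↥(Mfil i))))
    (hfaithful : ∀ r : R, (∀ x : ↥(Mfil (i - 1)), r • x = 0) → r = 0) :
    HasPdLE R N (n - 1) :=
  pd_le_of_ext_vanishing_faithful_general R S M t Mfil hlow hhigh N n hn i hi1 hit hvanish hfaithful
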